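/- arXiv:2108.06360 — 2 statements merged into one kernel-verified Lean document; each statement's English description precedes it below -/
import Mathlib

section
/- Suppose F ∈ [0, 1) and (1 − 1/γ)·ĥ(ωκ₂(1 − F)/(β₂λ)) > β₂. Then there exists a unique pair (u, v) with u > 0 and 1/γ < v < 1 such that β₂·u·v = ωκ₂(1 − F)/λ and (1 − 1/(γv))·ĥ(u) = β₂. -/
/-- The nondimensional light-dependent growth function
`ĥ(u) = (1/(u + k₁)) · log((1 + I)/(1 + I·exp(−(u + k₁))))`. -/
noncomputable def hhat (k₁ I u : ℝ) : ℝ :=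
  (1 / (u + k₁)) * Real.log ((1 + I) / (1 + I * Real.exp (-(u + k₁))))

/-!
Write `ĥ(u) = L(u + k₁)/(u + k₁)` with `L(s) = log((1 + I)/(1 + I e⁻ˢ))`. Since `L(0) = 0` and
`L'(s) = I/(eˢ + I)` is strictly decreasing, `L` is strictly concave, so its secant slope
`L(s)/s` through the origin, hence `ĥ`, is positive and strictly decreasing.

Substituting `v = C/u` with `C = ωκ₂(1 − F)/(β₂λ)` turns the constraint `1/γ < v < 1` into
`C < u < γC` and the second equation into `g(u) = β₂` with `g(u) = (1 − u/(γC))·ĥ(u)`. On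
`[C, γC]` the function `g` is continuous and strictly decreasing, from `(1 − 1/γ)·ĥ(C) > β₂`
down to `0 < β₂`, so the intermediate value theorem gives exactly one root.
-/

open Real Set

theorem existsUnique_mem_Ioo_of_strictAntiOn {α δ : Type*} [ConditionallyCompleteLinearOrder α]
    [TopologicalSpace α] [OrderTopology α] [DenselyOrdered α] [LinearOrder δ] [TopologicalSpace δ]
    [OrderClosedTopology δ] {f : α → δ} {a b : α} {y : δ} (hab : a ≤ b)
    (hf : ContinuousOn f (Icc a b)) (hf_anti : StrictAntiOn f (Icc a b))
    (hy : y ∈ Ioo (f b) (f a)) : ∃! x, x ∈ Ioo a b ∧ f x = y := by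
  obtain ⟨x, hx, rfl⟩ := intermediate_value_Ioo' hab hf hy
  exact ⟨x, ⟨hx, rfl⟩, fun x' ⟨hx', hfx'⟩ =>
    hf_anti.injOn (Ioo_subset_Icc_self hx') (Ioo_subset_Icc_self hx) hfx'⟩

-- `L(s) = ∫₀ˢ p/(1 + p) dt` with light `p = I e⁻ᵗ` at optical depth `t`.
noncomputable def lightIntegral (I s : ℝ) : ℝ :=
  log ((1 + I) / (1 + I * exp (-s)))

lemma hhat_eq_lightIntegral_div (k₁ I u : ℝ) :
    hhat k₁ I u = lightIntegral I (u + k₁) / (u + k₁) := by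
  rw [hhat, lightIntegral, one_div_mul_eq_div]

section lightIntegral

variable {I : ℝ}

lemma lightIntegral_zero : lightIntegral I 0 = 0 := by
  rcases eq_or_ne (1 + I) 0 with h | h <;> simp [lightIntegral, h]

lemma lightIntegral_pos (hI : 0 < I) {s : ℝ} (hs : 0 < s) : 0 < lightIntegral I s := by
  have hexp : exp (-s) < 1 := exp_lt_one_iff.2 (neg_neg_of_pos hs)
  refine log_pos ((one_lt_div (by positivity)).2 ?_)
  nlinarith

lemma hasDerivAt_lightIntegral (hI : 0 ≤ I) (s : ℝ) :
    HasDerivAt (lightIntegral I) (I / (exp s + I)) s := by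
  have hden : 0 < 1 + I * exp (-s) := by positivity
  have hquot := (hasDerivAt_const s (1 + I)).fun_div
    ((((hasDerivAt_neg s).exp).const_mul I).const_add 1) hden.ne'
  refine (hquot.log (by positivity)).congr_deriv ?_
  rw [exp_neg] at hden ⊢
  field_simp
  ring

lemma continuous_lightIntegral (hI : 0 ≤ I) : Continuous (lightIntegral I) :=
  continuous_iff_continuousAt.2 fun s => (hasDerivAt_lightIntegral hI s).continuousAt

lemma strictConcaveOn_lightIntegral (hI : 0 < I) : StrictConcaveOn ℝ univ (lightIntegral I) := by
  refine StrictAnti.strictConcaveOn_univ_of_deriv (continuous_lightIntegral hI.le) ?_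
  intro s t hst
  simp only [(hasDerivAt_lightIntegral hI.le _).deriv]
  gcongr

lemma strictAntiOn_lightIntegral_div (hI : 0 < I) :
    StrictAntiOn (fun s => lightIntegral I s / s) (Ioi 0) := by
  intro s hs t ht hst
  simpa [lightIntegral_zero] using (strictConcaveOn_lightIntegral hI).secant_strict_mono
    (mem_univ 0) (mem_univ s) (mem_univ t) (ne_of_gt hs) (ne_of_gt ht) hst

end lightIntegral

section hhat

variable {k₁ I : ℝ}

lemma hhat_pos (hI : 0 < I) {u : ℝ} (hu : -k₁ < u) : 0 < hhat k₁ I u := by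
  have hs : 0 < u + k₁ := by linarith
  rw [hhat_eq_lightIntegral_div]
  exact div_pos (lightIntegral_pos hI hs) hs

lemma strictAntiOn_hhat (hI : 0 < I) : StrictAntiOn (hhat k₁ I) (Ioi (-k₁)) := by
  intro u hu v hv huv
  simp only [hhat_eq_lightIntegral_div]
  exact strictAntiOn_lightIntegral_div hI (mem_Ioi.2 (by linarith [mem_Ioi.1 hu]))
    (mem_Ioi.2 (by linarith [mem_Ioi.1 hv])) (by linarith)

lemma continuousOn_hhat (hI : 0 ≤ I) : ContinuousOn (hhat k₁ I) (Ioi (-k₁)) := by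
  simp only [funext (hhat_eq_lightIntegral_div k₁ I)]
  refine ((continuous_lightIntegral hI).comp_continuousOn ?_).div ?_ ?_
  · fun_prop
  · fun_prop
  · exact fun u hu => (neg_lt_iff_pos_add.1 (mem_Ioi.1 hu)).ne'

lemma strictAntiOn_one_sub_div_mul_hhat (hI : 0 < I) {a b : ℝ} (ha : -k₁ < a) (hb : 0 < b) :
    StrictAntiOn (fun u => (1 - u / b) * hhat k₁ I u) (Icc a b) := by
  intro u hu v hv huv
  have hv_pos : 0 < hhat k₁ I v := hhat_pos hI (by linarith [hu.1])
  have hvu : hhat k₁ I v < hhat k₁ I u :=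
    strictAntiOn_hhat hI (mem_Ioi.2 (by linarith [hu.1])) (mem_Ioi.2 (by linarith [hu.1])) huv
  have hv_le : 0 ≤ 1 - v / b := sub_nonneg.2 ((div_le_one hb).2 hv.2)
  have hdiv : u / b < v / b := div_lt_div_of_pos_right huv hb
  calc (1 - v / b) * hhat k₁ I v ≤ (1 - v / b) * hhat k₁ I u := by gcongr
    _ < (1 - u / b) * hhat k₁ I u := by gcongr; linarith

lemma existsUnique_one_sub_div_mul_hhat_eq (hI : 0 < I) {γ C β : ℝ} (hγ : 1 < γ) (hC : 0 < C)
    (hk₁C : -k₁ < C) (hβ : 0 < β) (hβC : β < (1 - 1 / γ) * hhat k₁ I C) :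
    ∃! u, u ∈ Ioo C (γ * C) ∧ (1 - u / (γ * C)) * hhat k₁ I u = β := by
  have hγC : 0 < γ * C := by positivity
  refine existsUnique_mem_Ioo_of_strictAntiOn (by nlinarith)
    ((continuous_const.sub (continuous_id.div_const _)).continuousOn.mul
      ((continuousOn_hhat hI.le).mono fun u hu => mem_Ioi.2 (hk₁C.trans_le hu.1)))
    (strictAntiOn_one_sub_div_mul_hhat hI hk₁C hγC) ⟨?_, ?_⟩
  · simpa [div_self hγC.ne'] using hβ
  · have hCγ : C / (γ * C) = 1 / γ := by field_simp
    simpa only [hCγ] using hβC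

end hhat

lemma reduced_system_iff {γ C u v h β : ℝ} (hγ : 0 < γ) (hu : 0 < u) :
    (1 / γ < v ∧ v < 1 ∧ u * v = C ∧ (1 - 1 / (γ * v)) * h = β) ↔
      (u ∈ Ioo C (γ * C) ∧ (1 - u / (γ * C)) * h = β ∧ v = C / u) := by
  have hlower : 1 / γ < C / u ↔ u < γ * C := by rw [div_lt_div_iff₀ hγ hu, one_mul, mul_comm]
  have hupper : C / u < 1 ↔ C < u := div_lt_one hu
  have hfactor : 1 / (γ * (C / u)) = u / (γ * C) := by field_simp
  rw [mul_comm u v, ← eq_div_iff hu.ne']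
  constructor
  · rintro ⟨hv₁, hv₂, rfl, heq⟩
    exact ⟨⟨hupper.1 hv₂, hlower.1 hv₁⟩, hfactor ▸ heq, rfl⟩
  · rintro ⟨⟨hCu, huγ⟩, heq, rfl⟩
    exact ⟨hlower.2 huγ, hupper.2 hCu, rfl, hfactor ▸ heq⟩

/-- Existence and uniqueness of the positive solution of the reduced quasi-steady-state
algebraic system of the single-lake phosphorus model. -/
theorem stmt_3 (k₁ I ω κ₂ lam β₂ γ F : ℝ)
    (hk₁ : 0 < k₁) (hI : 0 < I) (hω : 0 < ω) (hκ₂ : 0 < κ₂) (hlam : 0 < lam)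
    (hβ₂ : 0 < β₂) (hγ : 1 < γ) (hF : F ∈ Set.Ico (0 : ℝ) 1)
    (hcond : (1 - 1 / γ) * hhat k₁ I (ω * κ₂ * (1 - F) / (β₂ * lam)) > β₂) :
    ∃! uv : ℝ × ℝ, 0 < uv.1 ∧ 1 / γ < uv.2 ∧ uv.2 < 1 ∧
      β₂ * uv.1 * uv.2 = ω * κ₂ * (1 - F) / lam ∧
      (1 - 1 / (γ * uv.2)) * hhat k₁ I uv.1 = β₂ := by
  set C := ω * κ₂ * (1 - F) / (β₂ * lam) with hC_def
  have hC : 0 < C := by have := sub_pos.2 hF.2; positivity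
  have hγ₀ : 0 < γ := by linarith
  have hproduct (u v : ℝ) : β₂ * u * v = ω * κ₂ * (1 - F) / lam ↔ u * v = C := by
    rw [hC_def, eq_div_iff hlam.ne', eq_div_iff (by positivity)]
    ring_nf
  obtain ⟨u, ⟨hu, hgu⟩, huniq⟩ :=
    existsUnique_one_sub_div_mul_hhat_eq hI hγ hC (by linarith) hβ₂ hcond
  have hu₀ : 0 < u := hC.trans hu.1
  refine ⟨(u, C / u), ?_, ?_⟩
  · obtain ⟨hv₁, hv₂, huv, heq⟩ := (reduced_system_iff hγ₀ hu₀).2 ⟨hu, hgu, rfl⟩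
    exact ⟨hu₀, hv₁, hv₂, (hproduct _ _).2 huv, heq⟩
  · rintro ⟨u', v'⟩ ⟨hu', hv₁, hv₂, huv, heq⟩
    dsimp only at hu' hv₁ hv₂ huv heq
    obtain ⟨hu'_mem, hgu', rfl⟩ :=
      (reduced_system_iff hγ₀ hu').1 ⟨hv₁, hv₂, (hproduct _ _).1 huv, heq⟩
    rw [huniq u' ⟨hu'_mem, hgu'⟩]
end

section
/- Suppose η̂ > 1/2 + σ̂a₁/(a₂ + 1) and there exists F̄ ∈ (0, 1) with J(F̄) > F̄ + η̂ − 1/2. Then there exist exactly two points F_u < F_h in (0, 1) satisfying J(F) = F + η̂ − 1/2, and moreover G(0) = 0, G(F) < 0 for F ∈ (0, F_u), G(F) > 0 for F ∈ (F_u, F_h), and G(F) < 0 for F ∈ (F_h, 1]. -/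
/-!
Multiplying `J(F) - (F + η̂ - 1/2)` by the denominator `a₂(1 - F) + 1`, which is positive on
`F ≤ 1`, turns it into a quadratic `P`. `P` is negative at `0` (this is the bound on `η̂`),
negative at `1` (where `J` vanishes) and positive at `F̄`, so its leading coefficient is
negative and its two roots `F_u < F̄ < F_h` lie in `(0, 1)`. For `F ∈ (0, 1)` the clamp to
`[0, 1]` does not change on which side of `F` the value `1/2 - η̂ + J(F)` lies, so `G(F)` has
the sign of `P(F)`.
-/

/-- `J(F) = σ̂·(1 + ξF)·a₁(1 − F)/(a₂(1 − F) + 1)`. -/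
noncomputable def Jfun (σ ξ a₁ a₂ F : ℝ) : ℝ :=
  σ * (1 + ξ * F) * (a₁ * (1 - F)) / (a₂ * (1 - F) + 1)

/-- The right-hand side `G(F) = max{0, min{1, 1/2 − η̂ + J(F)}} − F` of the reduced
single-lake dynamics. -/
noncomputable def Gfun (σ ξ a₁ a₂ η F : ℝ) : ℝ :=
  max 0 (min 1 (1 / 2 - η + Jfun σ ξ a₁ a₂ F)) - F

section Quadratic

variable {a b c : ℝ}

theorem quadratic_eq_mul_sub_mul_sub (ha : a ≠ 0) {s : ℝ} (h : discrim a b c = s * s) (x : ℝ) :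
    a * (x * x) + b * x + c = a * (x - (-b + s) / (2 * a)) * (x - (-b - s) / (2 * a)) := by
  rw [discrim] at h
  field_simp
  linear_combination -h

theorem mul_sub_mul_sub_pos_iff (ha : a < 0) {u v : ℝ} (huv : u < v) (x : ℝ) :
    0 < a * (x - u) * (x - v) ↔ u < x ∧ x < v := by
  constructor
  · intro h
    constructor <;> by_contra! hx <;> nlinarith [mul_nonneg (sub_nonneg.2 hx) (neg_nonneg.2 ha.le)]
  · rintro ⟨hux, hxv⟩
    nlinarith [mul_pos (sub_pos.2 hux) (sub_pos.2 hxv)]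

theorem mul_sub_mul_sub_neg_iff (ha : a < 0) {u v : ℝ} (huv : u < v) (x : ℝ) :
    a * (x - u) * (x - v) < 0 ↔ x < u ∨ v < x := by
  constructor
  · intro h
    by_contra! hx
    nlinarith [mul_nonneg (sub_nonneg.2 hx.1) (sub_nonneg.2 hx.2)]
  · rintro (hxu | hvx)
    · nlinarith [mul_pos (sub_pos.2 hxu) (sub_pos.2 (hxu.trans huv))]
    · nlinarith [mul_pos (sub_pos.2 (huv.trans hvx)) (sub_pos.2 hvx)]

theorem neg_of_quadratic_neg_pos_neg {x t y : ℝ} (hxt : x < t) (hty : t < y)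
    (hx : a * (x * x) + b * x + c < 0) (ht : 0 < a * (t * t) + b * t + c)
    (hy : a * (y * y) + b * y + c < 0) : a < 0 := by
  by_contra! ha
  -- For `P z = a z² + b z + c`:
  -- `(y - x) P t - (y - t) P x - (t - x) P y = -a (t - x) (y - t) (y - x)`
  nlinarith [mul_nonneg (mul_nonneg (mul_nonneg ha (sub_pos.2 hxt).le) (sub_pos.2 hty).le)
    (sub_pos.2 (hxt.trans hty)).le, mul_pos (sub_pos.2 hxt) (neg_pos.2 hy),
    mul_pos (sub_pos.2 hty) (neg_pos.2 hx), mul_pos (sub_pos.2 (hxt.trans hty)) ht]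

theorem exists_quadratic_factor_of_neg_of_pos (ha : a < 0) {t : ℝ}
    (ht : 0 < a * (t * t) + b * t + c) :
    ∃ u v, u < v ∧ ∀ z, a * (z * z) + b * z + c = a * (z - u) * (z - v) := by
  have hdisc : 0 < discrim a b c := by
    rw [discrim]
    nlinarith [sq_nonneg (2 * a * t + b), mul_pos (neg_pos.2 ha) ht]
  have hs : discrim a b c = √(discrim a b c) * √(discrim a b c) :=
    (Real.mul_self_sqrt hdisc.le).symm
  refine ⟨_, _, ?_, quadratic_eq_mul_sub_mul_sub ha.ne hs⟩
  exact div_lt_div_of_neg_of_lt (by linarith) (by linarith [Real.sqrt_pos.2 hdisc])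

theorem exists_roots_of_quadratic_neg_pos_neg {x t y : ℝ} (hxt : x < t) (hty : t < y)
    (hx : a * (x * x) + b * x + c < 0) (ht : 0 < a * (t * t) + b * t + c)
    (hy : a * (y * y) + b * y + c < 0) :
    a < 0 ∧ ∃ u v, x < u ∧ u < t ∧ t < v ∧ v < y ∧
      ∀ z, a * (z * z) + b * z + c = a * (z - u) * (z - v) := by
  have ha := neg_of_quadratic_neg_pos_neg hxt hty hx ht hy
  obtain ⟨u, v, huv, hfact⟩ := exists_quadratic_factor_of_neg_of_pos ha ht
  rw [hfact] at hx ht hy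
  obtain ⟨hut, htv⟩ := (mul_sub_mul_sub_pos_iff ha huv t).1 ht
  have hxu := ((mul_sub_mul_sub_neg_iff ha huv x).1 hx).resolve_right (by linarith)
  have hvy := ((mul_sub_mul_sub_neg_iff ha huv y).1 hy).resolve_left (by linarith)
  exact ⟨ha, u, v, hxu, hut, htv, hvy, hfact⟩

end Quadratic

section SingleLake

variable {σ ξ a₁ a₂ η : ℝ}

theorem Jfun_zero : Jfun σ ξ a₁ a₂ 0 = σ * a₁ / (a₂ + 1) := by
  simp [Jfun]

theorem Jfun_one : Jfun σ ξ a₁ a₂ 1 = 0 := by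
  simp [Jfun]

theorem Jfun_sub_line_mul_denom {F : ℝ} (hF : a₂ * (1 - F) + 1 ≠ 0) :
    (Jfun σ ξ a₁ a₂ F - (F + η - 1 / 2)) * (a₂ * (1 - F) + 1) =
      (a₂ - σ * a₁ * ξ) * (F * F) + (σ * a₁ * (ξ - 1) - (a₂ + 1) + (η - 1 / 2) * a₂) * F +
        (σ * a₁ - (η - 1 / 2) * (a₂ + 1)) := by
  rw [Jfun, sub_mul, div_mul_cancel₀ _ hF]
  ring

theorem Gfun_zero (h : 1 / 2 - η + Jfun σ ξ a₁ a₂ 0 ≤ 0) : Gfun σ ξ a₁ a₂ η 0 = 0 := by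
  rw [Gfun, sub_zero, max_eq_left ((min_le_right _ _).trans h)]

theorem Gfun_neg_of_Jfun_lt {F : ℝ} (hF : 0 < F) (hJ : Jfun σ ξ a₁ a₂ F < F + η - 1 / 2) :
    Gfun σ ξ a₁ a₂ η F < 0 := by
  rw [Gfun, sub_neg]
  exact max_lt hF ((min_le_right _ _).trans_lt (by linarith))

theorem Gfun_pos_of_lt_Jfun {F : ℝ} (hF : F < 1) (hJ : F + η - 1 / 2 < Jfun σ ξ a₁ a₂ F) :
    0 < Gfun σ ξ a₁ a₂ η F := by
  rw [Gfun, sub_pos]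
  exact (lt_min hF (by linarith)).trans_le (le_max_right _ _)

end SingleLake

theorem stmt_10_general (σ ξ a₁ a₂ η : ℝ)
    (hσ : 0 < σ) (ha₁ : 0 < a₁) (ha₂ : 0 < a₂)
    (hη : 1 / 2 + σ * a₁ / (a₂ + 1) < η)
    (hcross : ∃ Fbar ∈ Set.Ioo (0 : ℝ) 1, Fbar + η - 1 / 2 < Jfun σ ξ a₁ a₂ Fbar) :
    ∃ Fu Fh : ℝ, Fu ∈ Set.Ioo (0 : ℝ) 1 ∧ Fh ∈ Set.Ioo (0 : ℝ) 1 ∧ Fu < Fh ∧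
      Jfun σ ξ a₁ a₂ Fu = Fu + η - 1 / 2 ∧
      Jfun σ ξ a₁ a₂ Fh = Fh + η - 1 / 2 ∧
      (∀ F ∈ Set.Ioo (0 : ℝ) 1, Jfun σ ξ a₁ a₂ F = F + η - 1 / 2 → F = Fu ∨ F = Fh) ∧
      Gfun σ ξ a₁ a₂ η 0 = 0 ∧
      (∀ F ∈ Set.Ioo (0 : ℝ) Fu, Gfun σ ξ a₁ a₂ η F < 0) ∧
      (∀ F ∈ Set.Ioo Fu Fh, 0 < Gfun σ ξ a₁ a₂ η F) ∧
      (∀ F ∈ Set.Ioc Fh (1 : ℝ), Gfun σ ξ a₁ a₂ η F < 0) := by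
  obtain ⟨Fb, ⟨hFb0, hFb1⟩, hFbJ⟩ := hcross
  have hD : ∀ F ≤ 1, 0 < a₂ * (1 - F) + 1 := fun F hF => by nlinarith
  have hJ0 : 0 < σ * a₁ / (a₂ + 1) := by positivity
  have hP F (hF : F ≤ 1) :=
    Jfun_sub_line_mul_denom (σ := σ) (ξ := ξ) (a₁ := a₁) (η := η) (hD F hF).ne'
  obtain ⟨hA, Fu, Fh, hFu0, hFuFb, hFbFh, hFh1, hfact⟩ :=
    exists_roots_of_quadratic_neg_pos_neg hFb0 hFb1
      ((hP 0 zero_le_one).symm.trans_lt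
        (mul_neg_of_neg_of_pos (by rw [Jfun_zero]; linarith) (hD 0 zero_le_one)))
      ((mul_pos (sub_pos.2 hFbJ) (hD Fb hFb1.le)).trans_eq (hP Fb hFb1.le))
      ((hP 1 le_rfl).symm.trans_lt (by rw [Jfun_one]; linarith))
  have huv : Fu < Fh := hFuFb.trans hFbFh
  have hsign F (hF : F ≤ 1) := (hP F hF).trans (hfact F)
  have hroot F (hF : F ≤ 1) : Jfun σ ξ a₁ a₂ F = F + η - 1 / 2 ↔ F = Fu ∨ F = Fh := by
    rw [← sub_eq_zero, ← mul_eq_zero_iff_right (hD F hF).ne', hsign F hF]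
    simp [hA.ne, sub_eq_zero]
  have hGneg F (hF0 : 0 < F) (hF1 : F ≤ 1) (hF : F < Fu ∨ Fh < F) : Gfun σ ξ a₁ a₂ η F < 0 :=
    Gfun_neg_of_Jfun_lt hF0 <| sub_neg.1 <| neg_of_mul_neg_left
      (by rw [hsign F hF1]; exact (mul_sub_mul_sub_neg_iff hA huv F).2 hF) (hD F hF1).le
  have hGpos F (hF : Fu < F ∧ F < Fh) : 0 < Gfun σ ξ a₁ a₂ η F :=
    Gfun_pos_of_lt_Jfun (by linarith [hF.2]) <| sub_pos.1 <| pos_of_mul_pos_left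
      (by rw [hsign F (by linarith [hF.2])]; exact (mul_sub_mul_sub_pos_iff hA huv F).2 hF)
      (hD F (by linarith [hF.2])).le
  refine ⟨Fu, Fh, ⟨hFu0, by linarith⟩, ⟨by linarith, hFh1⟩, huv,
    (hroot Fu (by linarith)).2 (.inl rfl), (hroot Fh hFh1.le).2 (.inr rfl),
    fun F hF => (hroot F hF.2.le).1, Gfun_zero (by rw [Jfun_zero]; linarith),
    fun F hF => hGneg F hF.1 (by linarith [hF.2]) (.inl hF.2), hGpos,
    fun F hF => hGneg F (by linarith [hF.1]) hF.2 (.inr hF.1)⟩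

/-- The bistable case: for `η̂ > 1/2 + σ̂a₁/(a₂ + 1)` with the curve `J` crossing the line
somewhere in `(0,1)`, there are exactly two interior equilibria `F_u < F_h`, and the sign
pattern of `G` makes `0` and `F_h` stable and `F_u` unstable. -/
theorem stmt_10 (σ ξ a₁ a₂ η : ℝ)
    (hσ : 0 < σ) (hξ : 0 < ξ) (ha₁ : 0 < a₁) (ha₂ : 0 < a₂)
    (hη : 1 / 2 + σ * a₁ / (a₂ + 1) < η)
    (hcross : ∃ Fbar ∈ Set.Ioo (0 : ℝ) 1, Fbar + η - 1 / 2 < Jfun σ ξ a₁ a₂ Fbar) :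
    ∃ Fu Fh : ℝ, Fu ∈ Set.Ioo (0 : ℝ) 1 ∧ Fh ∈ Set.Ioo (0 : ℝ) 1 ∧ Fu < Fh ∧
      Jfun σ ξ a₁ a₂ Fu = Fu + η - 1 / 2 ∧
      Jfun σ ξ a₁ a₂ Fh = Fh + η - 1 / 2 ∧
      (∀ F ∈ Set.Ioo (0 : ℝ) 1, Jfun σ ξ a₁ a₂ F = F + η - 1 / 2 → F = Fu ∨ F = Fh) ∧
      Gfun σ ξ a₁ a₂ η 0 = 0 ∧
      (∀ F ∈ Set.Ioo (0 : ℝ) Fu, Gfun σ ξ a₁ a₂ η F < 0) ∧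
      (∀ F ∈ Set.Ioo Fu Fh, 0 < Gfun σ ξ a₁ a₂ η F) ∧
      (∀ F ∈ Set.Ioc Fh (1 : ℝ), Gfun σ ξ a₁ a₂ η F < 0) :=
  stmt_10_general σ ξ a₁ a₂ η hσ ha₁ ha₂ hη hcross
end
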